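/- For m ≥ 2, the magnitude chain complex of the directed cycle Z_m decomposes: for each vertex x and length ℓ, the subcomplex MC_*(x,ℓ) spanned by tuples starting at x of length ℓ is isomorphic, as a chain complex, to OP_*(ℓ,m) via (x, x₁, ..., x_k) ↦ (d(x,x₁), d(x₁,x₂), ..., d(x_{k-1},x_k)). -/

import Mathlib

open scoped Classical

/-- A directed graph on a vertex type `V` (loops allowed, no parallel edges). -/
structure DGraph (V : Type) where
  Adj : V → V → Prop

namespace DGraph
variable {V : Type}

/-- There is a directed path of length `n` (i.e. with `n` edges) from `x` to `y`. -/
def PathLen (G : DGraph V) (x y : V) (n : ℕ) : Prop :=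
  ∃ f : ℕ → V, f 0 = x ∧ f n = y ∧ ∀ i < n, G.Adj (f i) (f (i + 1))

/-- The shortest path metric, with values in `ℕ∞ = ℕ ∪ {∞}`. -/
noncomputable def edist (G : DGraph V) (x y : V) : ℕ∞ :=
  sInf {n : ℕ∞ | ∃ m : ℕ, n = m ∧ G.PathLen x y m}

/-- The length of a tuple of vertices: the sum of consecutive distances. -/
noncomputable def tlen (G : DGraph V) {k : ℕ} (f : Fin (k + 1) → V) : ℕ∞ :=
  ∑ i : Fin k, G.edist (f i.castSucc) (f i.succ)

/-- `y` is reachable from `x` by a directed path. -/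
def Reaches (G : DGraph V) (x y : V) : Prop := Relation.ReflTransGen G.Adj x y

/-- The induced subgraph on a set of vertices. -/
def induce (G : DGraph V) (A : Set V) : DGraph A := ⟨fun a b => G.Adj a.1 b.1⟩

end DGraph

variable {V : Type}

/-- Validity of a tuple as a magnitude-chain basis element of degree `k` and length `ℓ`:
consecutive entries are distinct, at finite distance, and the total length is `ℓ`. -/
def MCValid (G : DGraph V) (k ℓ : ℕ) (f : Fin (k + 1) → V) : Prop :=
  (∀ i : Fin k, G.edist (f i.castSucc) (f i.succ) ≠ 0 ∧ G.edist (f i.castSucc) (f i.succ) ≠ ⊤) ∧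
    G.tlen f = (ℓ : ℕ∞)

/-- Basis of the magnitude chain group `MC_{k,ℓ}(G)`. -/
def MCb (G : DGraph V) (k ℓ : ℕ) : Type := {f : Fin (k + 1) → V // MCValid G k ℓ f}

/-- The magnitude chain group `MC_{k,ℓ}(G)` with coefficients in `R`. -/
abbrev MCMod (R : Type) [CommRing R] (G : DGraph V) (k ℓ : ℕ) := MCb G k ℓ →₀ R

/-- Deletion of the interior entry in position `j+1` of a `(k+2)`-tuple. -/
def delMid {k : ℕ} (f : Fin (k + 2) → V) (j : Fin k) : Fin (k + 1) → V :=
  f ∘ (Fin.succAbove j.succ.castSucc)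

/-- The magnitude-chain differential `MC_{k+1,ℓ}(G) → MC_{k,ℓ}(G)`: delete interior
entries with alternating signs, omitting any length-decreasing term. -/
noncomputable def dMC (R : Type) [CommRing R] (G : DGraph V) (k ℓ : ℕ) :
    MCMod R G (k + 1) ℓ →ₗ[R] MCMod R G k ℓ :=
  Finsupp.lsum R fun b => LinearMap.toSpanSingleton R _
    (∑ j : Fin k, (-1 : R) ^ ((j : ℕ) + 1) •
      (if h : MCValid G k ℓ (delMid b.1 j) then
        Finsupp.single (⟨delMid b.1 j, h⟩ : MCb G k ℓ) (1 : R) else 0))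

/-- The outgoing magnitude differential from degree `k` (zero in degree `0`). -/
noncomputable def dMCOut (R : Type) [CommRing R] (G : DGraph V) (ℓ : ℕ) :
    (k : ℕ) → MCMod R G k ℓ →ₗ[R] MCMod R G (k - 1) ℓ
  | 0 => 0
  | (k + 1) => dMC R G k ℓ

/-- Magnitude homology `MH_{k,ℓ}(G)` with coefficients in `R`. -/
noncomputable abbrev MH (R : Type) [CommRing R] (G : DGraph V) (k ℓ : ℕ) :=
  letI : HasQuotient (LinearMap.ker (dMCOut R G ℓ k))
      (Submodule R (LinearMap.ker (dMCOut R G ℓ k))) :=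
      Submodule.hasQuotient (R := R) (M := LinearMap.ker (dMCOut R G ℓ k))
  LinearMap.ker (dMCOut R G ℓ k) ⧸
    (LinearMap.range (dMCOut R G ℓ (k + 1))).comap (LinearMap.ker (dMCOut R G ℓ k)).subtype

/-- Embedding of the magnitude chains into the free module on all tuples of vertices. -/
noncomputable def eMC (R : Type) [CommRing R] (G : DGraph V) (k ℓ : ℕ) :
    MCMod R G k ℓ →ₗ[R] ((Fin (k + 1) → V) →₀ R) :=
  Finsupp.lmapDomain R R Subtype.val

/-- Basis of a subcomplex of the magnitude chains, cut out by a predicate `P` on tuples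
(assumed closed under the interior deletions appearing in the differential). -/
def RCb (G : DGraph V) (P : ∀ k, (Fin (k + 1) → V) → Prop) (k ℓ : ℕ) : Type :=
  {f : Fin (k + 1) → V // MCValid G k ℓ f ∧ P k f}

/-- The degree-`k`, length-`ℓ` chain group of the subcomplex cut out by `P`. -/
abbrev RMod (R : Type) [CommRing R] (G : DGraph V) (P : ∀ k, (Fin (k + 1) → V) → Prop)
    (k ℓ : ℕ) := RCb G P k ℓ →₀ R

/-- The differential of the subcomplex cut out by `P`. -/
noncomputable def dR (R : Type) [CommRing R] (G : DGraph V)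
    (P : ∀ k, (Fin (k + 1) → V) → Prop) (k ℓ : ℕ) :
    RMod R G P (k + 1) ℓ →ₗ[R] RMod R G P k ℓ :=
  Finsupp.lsum R fun b => LinearMap.toSpanSingleton R _
    (∑ j : Fin k, (-1 : R) ^ ((j : ℕ) + 1) •
      (if h : MCValid G k ℓ (delMid b.1 j) ∧ P k (delMid b.1 j) then
        Finsupp.single (⟨delMid b.1 j, h⟩ : RCb G P k ℓ) (1 : R) else 0))

/-- The outgoing differential of the subcomplex from degree `k` (zero in degree `0`). -/
noncomputable def dROut (R : Type) [CommRing R] (G : DGraph V)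
    (P : ∀ k, (Fin (k + 1) → V) → Prop) (ℓ : ℕ) :
    (k : ℕ) → RMod R G P k ℓ →ₗ[R] RMod R G P (k - 1) ℓ
  | 0 => 0
  | (k + 1) => dR R G P k ℓ

/-- The degree-`k`, length-`ℓ` homology of the subcomplex cut out by `P`. -/
noncomputable abbrev RH (R : Type) [CommRing R] (G : DGraph V)
    (P : ∀ k, (Fin (k + 1) → V) → Prop) (k ℓ : ℕ) :=
  letI : HasQuotient (LinearMap.ker (dROut R G P ℓ k))
      (Submodule R (LinearMap.ker (dROut R G P ℓ k))) :=
      Submodule.hasQuotient (R := R) (M := LinearMap.ker (dROut R G P ℓ k))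
  LinearMap.ker (dROut R G P ℓ k) ⧸
    (LinearMap.range (dROut R G P ℓ (k + 1))).comap (LinearMap.ker (dROut R G P ℓ k)).subtype

/-- Embedding of the subcomplex chains into the free module on all tuples of vertices. -/
noncomputable def eR (R : Type) [CommRing R] (G : DGraph V)
    (P : ∀ k, (Fin (k + 1) → V) → Prop) (k ℓ : ℕ) :
    RMod R G P k ℓ →ₗ[R] ((Fin (k + 1) → V) →₀ R) :=
  Finsupp.lmapDomain R R Subtype.val

/-- `A ⊆ V`, with projection `π`, is a cofibration in `G`: an induced subgraph inclusion
with no edges from outside `A` into `A`, such that every vertex `x` in the reach of `A`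
has a projection `π x ∈ A` with `d(a,x) = d(a,π x) + d(π x,x)` for all `a ∈ A`. -/
def IsCofib (G : DGraph V) (A : Set V) (π : V → V) : Prop :=
  (∀ u v : V, u ∉ A → v ∈ A → ¬ G.Adj u v) ∧
  (∀ x : V, (∃ a ∈ A, G.Reaches a x) →
    π x ∈ A ∧ ∀ a ∈ A, G.edist a x = G.edist a (π x) + G.edist (π x) x)

/-- The predicate cutting out the subcomplex `A_{*,ℓ}(a,x)` of `MC_{*,ℓ}(X)`: tuples
starting at `a`, ending at `x`, with all intermediate entries in `A`. -/
def AP (A : Set V) (a x : V) : ∀ k, (Fin (k + 1) → V) → Prop :=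
  fun k f => f 0 = a ∧ f (Fin.last k) = x ∧
    ∀ i : Fin (k + 1), i ≠ 0 → i ≠ Fin.last k → f i ∈ A

/-- Basis of `OP_k(ℓ,m)`: ordered partitions of `ℓ` into `k` parts, all in `{1,...,m-1}`. -/
def OPb (ℓ : ℤ) (m k : ℕ) : Type :=
  {l : List ℕ // l.length = k ∧ (l.sum : ℤ) = ℓ ∧ ∀ x ∈ l, 1 ≤ x ∧ x < m}

/-- The degree-`k` chain module of the complex of ordered partitions with upper bound. -/
abbrev OPMod (R : Type) [CommRing R] (ℓ : ℤ) (m k : ℕ) := OPb ℓ m k →₀ R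

/-- The alternating sum of adjacent merges of a list, dropping merged entries `≥ m`. -/
noncomputable def dList (R : Type) [CommRing R] (m : ℕ) : List ℕ → (List ℕ →₀ R)
  | [] => 0
  | [_] => 0
  | a :: b :: t =>
      (if a + b < m then -Finsupp.single ((a + b) :: t) (1 : R) else 0)
        - Finsupp.mapDomain (List.cons a) (dList R m (b :: t))

/-- Embedding of `OP_k(ℓ,m)` into the free module on all lists. -/
noncomputable def eL (R : Type) [CommRing R] (ℓ : ℤ) (m k : ℕ) :
    OPMod R ℓ m k →ₗ[R] (List ℕ →₀ R) :=
  Finsupp.lmapDomain R R Subtype.val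

noncomputable def DL (R : Type) [CommRing R] (m : ℕ) : (List ℕ →₀ R) →ₗ[R] (List ℕ →₀ R) :=
  Finsupp.lsum R fun l => LinearMap.toSpanSingleton R _ (dList R m l)

noncomputable def rL (R : Type) [CommRing R] (ℓ : ℤ) (m k : ℕ) :
    (List ℕ →₀ R) →ₗ[R] OPMod R ℓ m k :=
  Finsupp.lcomapDomain Subtype.val Subtype.val_injective

/-- The differential of the complex `OP_*(ℓ,m)`: merge adjacent entries with alternating
signs `(-1)^i`, dropping any term in which the merged entry is `≥ m`. -/
noncomputable def dOP (R : Type) [CommRing R] (ℓ : ℤ) (m k : ℕ) :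
    OPMod R ℓ m (k + 1) →ₗ[R] OPMod R ℓ m k :=
  (rL R ℓ m k) ∘ₗ (DL R m) ∘ₗ (eL R ℓ m (k + 1))

/-- The outgoing differential from degree `k` (zero in degree `0`). -/
noncomputable def dOPOut (R : Type) [CommRing R] (ℓ : ℤ) (m : ℕ) :
    (k : ℕ) → OPMod R ℓ m k →ₗ[R] OPMod R ℓ m (k - 1)
  | 0 => 0
  | (k + 1) => dOP R ℓ m k

/-- Homology of the complex `OP_*(ℓ,m)` in degree `k`. -/
noncomputable abbrev OPH (R : Type) [CommRing R] (ℓ : ℤ) (m k : ℕ) :=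
  letI : HasQuotient (LinearMap.ker (dOPOut R ℓ m k))
      (Submodule R (LinearMap.ker (dOPOut R ℓ m k))) :=
      Submodule.hasQuotient (R := R) (M := LinearMap.ker (dOPOut R ℓ m k))
  LinearMap.ker (dOPOut R ℓ m k) ⧸
    (LinearMap.range (dOPOut R ℓ m (k + 1))).comap (LinearMap.ker (dOPOut R ℓ m k)).subtype

/-- The chain map `φ : OP_{*-2}(ℓ-m,m) → OP_*(ℓ,m)`, prepending `(1, m-1)`. -/
noncomputable def phiOP (R : Type) [CommRing R] (ℓ : ℤ) (m : ℕ) (hm : 2 ≤ m) (k : ℕ) :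
    OPMod R (ℓ - m) m k →ₗ[R] OPMod R ℓ m (k + 2) :=
  Finsupp.lmapDomain R R fun b =>
    ⟨1 :: (m - 1) :: b.1, by
      obtain ⟨h1, h2, h3⟩ := b.2
      refine ⟨by simpa using h1, ?_, ?_⟩
      · simp only [List.sum_cons]
        omega
      · intro y hy
        simp only [List.mem_cons] at hy
        rcases hy with rfl | rfl | hy
        · omega
        · omega
        · exact h3 y hy⟩

/-- The alternating list `(1, m-1, 1, m-1, ...)` with `2i` entries. -/
def altL (m : ℕ) : ℕ → List ℕ
  | 0 => []
  | i + 1 => 1 :: (m - 1) :: altL m i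

/-- The alternating list `(m-1, 1, m-1, 1, ...)` with `2i` entries. -/
def altL' (m : ℕ) : ℕ → List ℕ
  | 0 => []
  | i + 1 => (m - 1) :: 1 :: altL' m i

/-- The directed cycle `Z_m` on the vertex set `ZMod m`, with edges `x → x + 1`. -/
def Zc (m : ℕ) : DGraph (ZMod m) := ⟨fun x y => y = x + 1⟩


/-!
In `Z_m` the distance is `d(x, y) = (y - x).val`, so a tuple starting at `x` is determined by its
list of steps `(d(x, x₁), d(x₁, x₂), …)`, and conversely every list with entries in `[1, m)` is the
step list of the tuple of its partial sums. Deleting an interior vertex merges two adjacent steps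
`a, b` into `d(x_{j}, x_{j+2}) = (a + b) mod m`; the deleted tuple keeps the total length `ℓ`
exactly when `a + b < m`, which is also exactly when the merged partition survives in `OP_*(ℓ, m)`.
-/

lemma List.sum_map_mod_eq_sum_iff (m : ℕ) (L : List ℕ) :
    (L.map (· % m)).sum = L.sum ↔ ∀ e ∈ L, e % m = e := by
  induction L with
  | nil => simp
  | cons a t ih =>
    have hle : (t.map (· % m)).sum ≤ (t.map id).sum := List.sum_le_sum fun e _ => Nat.mod_le e m
    rw [List.map_id] at hle
    simp only [List.map_cons, List.sum_cons, List.forall_mem_cons, ← ih]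
    have := Nat.mod_le a m
    omega

lemma List.map_mod_eq_self {m : ℕ} {L : List ℕ} (hL : ∀ e ∈ L, e < m) : L.map (· % m) = L :=
  (List.map_congr_left fun e he => Nat.mod_eq_of_lt (hL e he)).trans (List.map_id L)

section MergeAt

variable {α : Type*}

def List.mergeAt [Add α] : ℕ → List α → List α
  | 0, a :: b :: t => (a + b) :: t
  | j + 1, a :: t => a :: mergeAt j t
  | _, L => L

variable [AddMonoid α]

@[simp]
lemma List.mergeAt_zero (a b : α) (t : List α) : (a :: b :: t).mergeAt 0 = (a + b) :: t := rfl

@[simp]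
lemma List.mergeAt_succ (j : ℕ) (a : α) (t : List α) :
    (a :: t).mergeAt (j + 1) = a :: t.mergeAt j :=
  rfl

lemma List.length_mergeAt {j : ℕ} {L : List α} (h : j + 1 < L.length) :
    (L.mergeAt j).length + 1 = L.length := by
  induction j generalizing L with
  | zero => rcases L with _ | ⟨a, _ | ⟨b, t⟩⟩ <;> simp_all
  | succ j ih => rcases L with _ | ⟨a, t⟩ <;> simp_all

lemma List.sum_mergeAt (j : ℕ) (L : List α) : (L.mergeAt j).sum = L.sum := by
  induction j generalizing L with
  | zero => rcases L with _ | ⟨a, _ | ⟨b, t⟩⟩ <;> simp [List.mergeAt, add_assoc]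
  | succ j ih => rcases L with _ | ⟨a, t⟩ <;> simp [List.mergeAt, ih]

lemma List.forall_mem_mergeAt_iff {j : ℕ} {L : List α} (h : j + 1 < L.length) {P : α → Prop}
    (hP : ∀ e ∈ L, P e) : (∀ e ∈ L.mergeAt j, P e) ↔ P (L.getD j 0 + L.getD (j + 1) 0) := by
  induction j generalizing L with
  | zero => rcases L with _ | ⟨a, _ | ⟨b, t⟩⟩ <;> simp_all
  | succ j ih => rcases L with _ | ⟨a, t⟩ <;> simp_all

lemma List.sum_take_mergeAt {j : ℕ} {L : List α} (h : j + 1 < L.length) (n : ℕ) :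
    ((L.mergeAt j).take n).sum = if n ≤ j then (L.take n).sum else (L.take (n + 1)).sum := by
  induction j generalizing L n with
  | zero =>
    rcases L with _ | ⟨a, _ | ⟨b, t⟩⟩ <;> simp at h
    rcases n with _ | n <;> simp [add_assoc]
  | succ j ih =>
    rcases L with _ | ⟨a, t⟩ <;> simp at h
    rcases n with _ | n
    · simp
    · simp only [mergeAt_succ, take_succ_cons, sum_cons, ih (by omega) n]
      split_ifs <;> first | rfl | omega

end MergeAt

lemma Finsupp.equivMapDomain_dite_single {α β M : Type*} [Zero M] {p : α → Prop} {q : β → Prop}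
    (e : Subtype p ≃ Subtype q) {a : α} [Decidable (p a)] {b : β} {c : Prop} [Decidable c]
    (hp : p a ↔ c) (hq : q b ↔ c) (he : ∀ h : p a, (e ⟨a, h⟩ : β) = b) (r : M) :
    equivMapDomain e (if h : p a then single ⟨a, h⟩ r else 0) =
      comapDomain Subtype.val (if c then single b r else 0) Subtype.val_injective.injOn := by
  by_cases hc : c
  · rw [dif_pos (hp.2 hc), if_pos hc, equivMapDomain_single,
      show e ⟨a, hp.2 hc⟩ = ⟨b, hq.2 hc⟩ from Subtype.ext (he _)]
    exact (comapDomain_single Subtype.val ⟨b, hq.2 hc⟩ r _).symm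
  · rw [dif_neg (mt hp.1 hc), if_neg hc, equivMapDomain_zero, comapDomain_zero]

def OPValid (ℓ : ℤ) (m k : ℕ) (L : List ℕ) : Prop :=
  L.length = k ∧ (L.sum : ℤ) = ℓ ∧ ∀ x ∈ L, 1 ≤ x ∧ x < m

lemma opValid_mergeAt_iff {ℓ : ℤ} {m k : ℕ} {L : List ℕ} (hL : OPValid ℓ m (k + 1) L) {j : ℕ}
    (hj : j < k) : OPValid ℓ m k (L.mergeAt j) ↔ L.getD j 0 + L.getD (j + 1) 0 < m := by
  obtain ⟨hlen, hsum, hmem⟩ := hL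
  have hj1 : j + 1 < L.length := by omega
  have ha : 1 ≤ L.getD j 0 := by
    rw [List.getD_eq_getElem _ _ (by omega)]
    exact (hmem _ (List.getElem_mem _)).1
  have := List.length_mergeAt hj1
  rw [OPValid, List.sum_mergeAt, List.forall_mem_mergeAt_iff hj1 hmem]
  omega

lemma dList_eq_sum (R : Type) [CommRing R] (m : ℕ) : ∀ L : List ℕ,
    dList R m L = ∑ j ∈ Finset.range (L.length - 1), (-1 : R) ^ (j + 1) •
      if L.getD j 0 + L.getD (j + 1) 0 < m then Finsupp.single (L.mergeAt j) 1 else 0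
  | [] => by simp [dList]
  | [a] => by simp [dList]
  | a :: b :: t => by
    rw [dList, dList_eq_sum R m (b :: t), Finsupp.mapDomain_finsetSum,
      show (a :: b :: t).length - 1 = t.length + 1 from rfl, Finset.sum_range_succ',
      sub_eq_neg_add, ← Finset.sum_neg_distrib]
    congr 1
    · refine Finset.sum_congr rfl fun j _ => ?_
      rw [Finsupp.mapDomain_smul, pow_succ (-1 : R) (j + 1), mul_neg_one, neg_smul]
      simp only [List.getD_cons_succ, List.mergeAt_succ]
      split_ifs <;> simp
    · simp only [List.getD_cons_succ, List.getD_cons_zero, List.mergeAt_zero]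
      split_ifs <;> simp

lemma eL_single (R : Type) [CommRing R] {ℓ : ℤ} {m k : ℕ} (l : OPb ℓ m k) (r : R) :
    eL R ℓ m k (Finsupp.single l r) = Finsupp.single l.1 r :=
  Finsupp.mapDomain_single

lemma DL_single (R : Type) [CommRing R] (m : ℕ) (L : List ℕ) :
    DL R m (Finsupp.single L 1) = dList R m L := by
  simp [DL]

namespace Zc

variable {m : ℕ}

lemma pathLen_iff (x y : ZMod m) (n : ℕ) : (Zc m).PathLen x y n ↔ y = x + n := by
  constructor
  · rintro ⟨f, rfl, rfl, hadj⟩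
    have key : ∀ i ≤ n, f i = f 0 + i := by
      intro i hi
      induction i with
      | zero => simp
      | succ j ih =>
        rw [hadj j (by omega), ih (by omega)]
        push_cast
        ring
    exact key n le_rfl
  · rintro rfl
    exact ⟨fun i => x + i, by simp, rfl, fun i _ => by simp [Zc, add_assoc]⟩

lemma edist_eq [NeZero m] (x y : ZMod m) : (Zc m).edist x y = (y - x).val := by
  refine le_antisymm (sInf_le ⟨(y - x).val, rfl, ?_⟩) (le_sInf ?_)
  · simp [pathLen_iff]
  · rintro _ ⟨n, rfl, hp⟩
    rw [pathLen_iff] at hp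
    have hn : ((n : ZMod m)) = y - x := by rw [hp]; ring
    rw [← hn, ZMod.val_natCast]
    exact_mod_cast Nat.mod_le n m

def steps {k : ℕ} (f : Fin (k + 1) → ZMod m) : List ℕ :=
  List.ofFn fun i : Fin k => (f i.succ - f i.castSucc).val

def walk (x : ZMod m) (L : List ℕ) (k : ℕ) : Fin (k + 1) → ZMod m :=
  fun i => x + ((L.take i).sum : ℕ)

@[simp]
lemma length_steps {k : ℕ} (f : Fin (k + 1) → ZMod m) : (steps f).length = k := by
  simp [steps]

@[simp]
lemma walk_zero (x : ZMod m) (L : List ℕ) (k : ℕ) : walk x L k 0 = x := by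
  simp [walk]

lemma walk_succ (x : ZMod m) (L : List ℕ) {k : ℕ} (i : Fin k) (hi : (i : ℕ) < L.length) :
    walk x L k i.succ = walk x L k i.castSucc + L[(i : ℕ)] := by
  simp [walk, List.sum_take_succ _ _ hi, add_assoc]

lemma steps_walk (x : ZMod m) {L : List ℕ} {k : ℕ} (hL : L.length = k) :
    steps (walk x L k) = L.map (· % m) := by
  subst hL
  rw [← List.ofFn_getElem_eq_map]
  simp [steps, walk_succ, ZMod.val_natCast]

lemma walk_steps [NeZero m] {k : ℕ} (f : Fin (k + 1) → ZMod m) :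
    walk (f 0) (steps f) k = f := by
  funext i
  induction i using Fin.induction with
  | zero => simp
  | succ i ih =>
    rw [walk_succ _ _ i (by simp), ih]
    simp [steps, ZMod.natCast_val, ZMod.cast_id]

lemma delMid_walk (x : ZMod m) {L : List ℕ} {k : ℕ} (j : Fin k) (hj : (j : ℕ) + 1 < L.length) :
    delMid (walk x L (k + 1)) j = walk x (L.mergeAt j) k := by
  funext i
  have hval : ((j.succ.castSucc.succAbove i : Fin (k + 2)) : ℕ) =
      if (i : ℕ) ≤ j then (i : ℕ) else (i : ℕ) + 1 := by
    simp only [Fin.succAbove, Fin.lt_def]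
    split_ifs <;> simp_all
  simp only [delMid, walk, Function.comp_apply, hval, List.sum_take_mergeAt hj]
  split_ifs <;> rfl

lemma length_steps_mergeAt {k : ℕ} (f : Fin (k + 2) → ZMod m) (j : Fin k) :
    ((steps f).mergeAt j).length = k := by
  have := List.length_mergeAt (L := steps f) (j := j) (by simp)
  simp_all

variable [NeZero m]

lemma mcValid_iff {k ℓ : ℕ} (f : Fin (k + 1) → ZMod m) :
    MCValid (Zc m) k ℓ f ↔ (∀ e ∈ steps f, e ≠ 0) ∧ (steps f).sum = ℓ := by
  simp [MCValid, DGraph.tlen, edist_eq, steps, List.sum_ofFn, ← Nat.cast_sum]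

lemma mcValid_walk_iff (x : ZMod m) {L : List ℕ} {k ℓ : ℕ} (hL : L.length = k)
    (hsum : L.sum = ℓ) : MCValid (Zc m) k ℓ (walk x L k) ↔ OPValid ℓ m k L := by
  simp only [OPValid, hL, hsum, true_and]
  rw [mcValid_iff, steps_walk x hL, List.forall_mem_map, ← hsum, List.sum_map_mod_eq_sum_iff,
    ← forall₂_and]
  refine forall₂_congr fun e _ => ?_
  rw [Nat.mod_eq_iff_lt (NeZero.ne m)]
  constructor <;> rintro ⟨h, hlt⟩ <;> rw [Nat.mod_eq_of_lt hlt] at * <;> omega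

noncomputable def stepsEquiv (x : ZMod m) (ℓ k : ℕ) :
    RCb (Zc m) (fun _ f => f 0 = x) k ℓ ≃ OPb ℓ m k where
  toFun b := by
    refine ⟨steps b.1, length_steps b.1, by exact_mod_cast ((mcValid_iff b.1).1 b.2.1).2,
      fun e he => ⟨Nat.one_le_iff_ne_zero.2 (((mcValid_iff b.1).1 b.2.1).1 e he), ?_⟩⟩
    obtain ⟨i, rfl⟩ := List.mem_ofFn.1 he
    exact ZMod.val_lt _
  invFun l := ⟨walk x l.1 k, (mcValid_walk_iff x l.2.1 (by exact_mod_cast l.2.2.1)).2 l.2,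
    walk_zero x l.1 k⟩
  left_inv b := Subtype.ext (b.2.2 ▸ walk_steps b.1)
  right_inv l := Subtype.ext <|
    (steps_walk x l.2.1).trans <| List.map_mod_eq_self fun e he => (l.2.2.2 e he).2

@[simp]
lemma coe_stepsEquiv_apply (x : ZMod m) {ℓ k : ℕ} (b : RCb (Zc m) (fun _ f => f 0 = x) k ℓ) :
    (stepsEquiv x ℓ k b).1 = steps b.1 :=
  rfl

lemma delMid_eq_walk_mergeAt {k : ℕ} (f : Fin (k + 2) → ZMod m) (j : Fin k) :
    delMid f j = walk (f 0) ((steps f).mergeAt j) k := by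
  rw [← delMid_walk (f 0) j (by simp), walk_steps]

lemma mcValid_delMid_iff {k ℓ : ℕ} {f : Fin (k + 2) → ZMod m} (hf : MCValid (Zc m) (k + 1) ℓ f)
    (j : Fin k) : MCValid (Zc m) k ℓ (delMid f j) ↔ OPValid ℓ m k ((steps f).mergeAt j) := by
  rw [delMid_eq_walk_mergeAt]
  refine mcValid_walk_iff _ (length_steps_mergeAt f j) ?_
  rw [List.sum_mergeAt, ((mcValid_iff f).1 hf).2]

lemma steps_delMid {k ℓ : ℕ} {f : Fin (k + 2) → ZMod m} (hf : MCValid (Zc m) (k + 1) ℓ f)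
    {j : Fin k} (hj : MCValid (Zc m) k ℓ (delMid f j)) :
    steps (delMid f j) = (steps f).mergeAt j := by
  rw [delMid_eq_walk_mergeAt, steps_walk _ (length_steps_mergeAt f j)]
  exact List.map_mod_eq_self fun e he => (((mcValid_delMid_iff hf j).1 hj).2.2 e he).2

lemma stepsEquiv_comp_dR (R : Type) [CommRing R] (x : ZMod m) (ℓ k : ℕ) :
    (Finsupp.domLCongr (M := R) (R := R) (stepsEquiv x ℓ k)).toLinearMap ∘ₗ
        dR R (Zc m) (fun _ f => f 0 = x) k ℓ =
      dOP R ℓ m k ∘ₗ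
        (Finsupp.domLCongr (M := R) (R := R) (stepsEquiv x ℓ (k + 1))).toLinearMap := by
  refine Finsupp.lhom_ext' fun b => LinearMap.ext_ring ?_
  simp only [LinearMap.comp_apply, Finsupp.lsingle_apply, LinearEquiv.coe_coe,
    Finsupp.domLCongr_single, dR, dOP, eL_single, DL_single, Finsupp.lsum_single,
    LinearMap.toSpanSingleton_apply, one_smul, map_sum, map_smul, dList_eq_sum,
    coe_stepsEquiv_apply, length_steps, Nat.add_sub_cancel]
  -- `erw`: the sums and scalar actions of `dR` are taken in `RMod`, whose instances are only
  -- defeq, not syntactically equal, to those of `Finsupp.domLCongr`.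
  erw [map_sum]
  rw [← Fin.sum_univ_eq_sum_range]
  refine Finset.sum_congr rfl fun j _ => ?_
  erw [map_smul]
  congr 1
  have hmerge : OPValid ℓ m k ((steps b.1).mergeAt j) ↔ _ :=
    opValid_mergeAt_iff (stepsEquiv x ℓ (k + 1) b).2 j.2
  refine Finsupp.equivMapDomain_dite_single _ ?_ hmerge (fun h => steps_delMid b.2.1 h.1) 1
  have hx : delMid b.1 j 0 = x := by
    rw [delMid_eq_walk_mergeAt, walk_zero]
    exact b.2.2
  exact (and_iff_left hx).trans ((mcValid_delMid_iff b.2.1 j).trans hmerge)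

end Zc

/-- for `m ≥ 2`, the subcomplex `MC_*(x,ℓ)` of the magnitude chains of
`Z_m` spanned by tuples starting at `x` of length `ℓ` is isomorphic as a chain complex
to `OP_*(ℓ,m)`, via `(x, x₁, ..., x_k) ↦ (d(x,x₁), d(x₁,x₂), ..., d(x_{k-1},x_k))`. -/
theorem Zc_MC_iso_OP (R : Type) [CommRing R] (m : ℕ) (hm : 2 ≤ m) (x : ZMod m) (ℓ : ℕ) :
    ∃ e : ∀ k, RMod R (Zc m) (fun _ f => f 0 = x) k ℓ →ₗ[R] OPMod R (ℓ : ℤ) m k,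
      -- `e` is an isomorphism in each degree:
      (∀ k, Function.Bijective (e k)) ∧
      -- `e` sends a tuple to its list of consecutive distances:
      (∀ k (b : RCb (Zc m) (fun _ f => f 0 = x) k ℓ),
        eL R (ℓ : ℤ) m k (e k (Finsupp.single b 1)) =
          Finsupp.single
            (List.ofFn fun i : Fin k =>
              ((Zc m).edist (b.1 i.castSucc) (b.1 i.succ)).toNat) 1) ∧
      -- `e` is a chain map:
      (∀ k (c : RMod R (Zc m) (fun _ f => f 0 = x) (k + 1) ℓ),
        e k (dR R (Zc m) (fun _ f => f 0 = x) k ℓ c) = dOP R (ℓ : ℤ) m k (e (k + 1) c)) := by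
  have : NeZero m := ⟨by omega⟩
  refine ⟨fun k => (Finsupp.domLCongr (Zc.stepsEquiv x ℓ k)).toLinearMap,
    fun k => (Finsupp.domLCongr _).bijective, fun k b => ?_,
    fun k => LinearMap.congr_fun (Zc.stepsEquiv_comp_dR R x ℓ k)⟩
  rw [LinearEquiv.coe_coe, Finsupp.domLCongr_single, eL_single, Zc.coe_stepsEquiv_apply]
  simp [Zc.steps, Zc.edist_eq]
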